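/- Let 1 ≤ k ≤ n and let λ ∈ Γ_k ⊂ ℝ^n. Then σ_{k−1}(λ|i) > 0 for every index i ∈ {1,…,n}. (Positivity of the linearized coefficients, i.e. ellipticity of S_k on the cone Γ_k.) -/

import Mathlib

/-!
Write `λ = a :: t` and `e_j` for the elementary symmetric functions, so that
`e_j(a :: t) = e_j(t) + a e_{j-1}(t)`. By strong induction on `k`, `e_j(t) > 0` for `j ≤ k - 2`.
If `e_{k-1}(t) ≤ 0`, the two identities for `j = k - 1, k` force `a > 0` and
`e_k(t) e_{k-2}(t) > e_{k-1}(t)²`, so adjoining `x = -e_{k-1}(t) / e_{k-2}(t) ≥ 0` to `t` gives a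
real vector `u` with `e_0(u), …, e_{k-2}(u) ≥ 0`, `e_{k-1}(u) = 0`, `e_k(u) > 0`.
This is impossible: by Rolle, a suitable derivative of `∏ (X + u_l)` is a real-rooted polynomial
whose coefficients are positive multiples of `e_k(u), …, e_0(u)`; nonnegative coefficients and
a positive constant term make all its roots negative, hence all its coefficients positive.
-/

open Finset

/-- The `m`-th elementary symmetric polynomial of `lam : Fin n → ℝ`. -/
noncomputable def esymmS (n m : ℕ) (lam : Fin n → ℝ) : ℝ :=
  ∑ s ∈ Finset.univ.powersetCard m, ∏ i ∈ s, lam i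

/-- The Gårding cone `Γ_m ⊆ ℝ^n`. -/
def GammaCone (n m : ℕ) (lam : Fin n → ℝ) : Prop :=
  ∀ j : ℕ, 1 ≤ j → j ≤ m → 0 < esymmS n j lam

/-- `σ_m(λ|i)`: the `m`-th elementary symmetric polynomial of `λ` with the `i`-th entry deleted. -/
noncomputable def esymmDel (n m : ℕ) (lam : Fin n → ℝ) (i : Fin n) : ℝ :=
  ∑ s ∈ (Finset.univ.erase i).powersetCard m, ∏ l ∈ s, lam l

/-- `σ_m(λ|ij)`: the `m`-th elementary symmetric polynomial of `λ` with the `i`-th and `j`-th entries deleted. -/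
noncomputable def esymmDel2 (n m : ℕ) (lam : Fin n → ℝ) (i j : Fin n) : ℝ :=
  ∑ s ∈ ((Finset.univ.erase i).erase j).powersetCard m, ∏ l ∈ s, lam l

open Polynomial

namespace Multiset

variable {R : Type*} [CommSemiring R]

@[simp]
theorem esymm_zero (s : Multiset R) : s.esymm 0 = 1 := by
  simp [esymm]

theorem esymm_eq_zero_of_card_lt {s : Multiset R} {j : ℕ} (h : card s < j) : s.esymm j = 0 := by
  simp [esymm, powersetCard_eq_empty _ h]

theorem esymm_cons_succ (a : R) (s : Multiset R) (j : ℕ) :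
    (a ::ₘ s).esymm (j + 1) = s.esymm (j + 1) + a * s.esymm j := by
  simp [esymm, map_map, sum_map_mul_left]

theorem esymm_pos {s : Multiset ℝ} (hs : ∀ r ∈ s, 0 < r) {j : ℕ} (hj : j ≤ card s) :
    0 < s.esymm j := by
  have hne : s.powersetCard j ≠ 0 := by
    rw [Ne, ← card_eq_zero, card_powersetCard]
    exact (Nat.choose_pos hj).ne'
  have hprod : ∀ t ∈ s.powersetCard j, (0 : ℝ) < t.prod := fun t ht =>
    prod_pos fun r hr => hs r (mem_of_le (mem_powersetCard.mp ht).1 hr)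
  simpa [esymm] using sum_lt_sum_of_nonempty hne hprod

end Multiset

namespace Polynomial

theorem Splits.derivative_real {p : ℝ[X]} (hp : p.Splits) : (derivative p).Splits := by
  rw [splits_iff_card_roots] at hp ⊢
  have hroots := card_roots_le_derivative p
  have hdeg := natDegree_derivative_le p
  have := card_roots' (derivative p)
  omega

theorem Splits.iterate_derivative_real {p : ℝ[X]} (hp : p.Splits) (m : ℕ) :
    (derivative^[m] p).Splits := by
  induction m with
  | zero => exact hp
  | succ m ih => rw [Function.iterate_succ_apply']; exact ih.derivative_real

theorem eval_pos_of_coeff_nonneg {p : ℝ[X]} (hp : ∀ j, 0 ≤ p.coeff j) (h0 : 0 < p.coeff 0)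
    {x : ℝ} (hx : 0 ≤ x) : 0 < p.eval x := by
  rw [eval_eq_sum_range]
  exact Finset.sum_pos' (fun j _ => mul_nonneg (hp j) (pow_nonneg hx j))
    ⟨0, by simp, by simpa using h0⟩

theorem coeff_pos_of_splits_of_coeff_nonneg {q : ℝ[X]} (hq : q.Splits)
    (hcoeff : ∀ j, 0 ≤ q.coeff j) (h0 : 0 < q.coeff 0) {j : ℕ} (hj : j ≤ q.natDegree) : 0 < q.coeff j := by
  have hroots : ∀ r ∈ q.roots.map Neg.neg, 0 < r := by
    simp only [Multiset.mem_map, forall_exists_index, and_imp, forall_apply_eq_imp_iff₂]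
    intro r hr
    by_contra! hr0
    exact (eval_pos_of_coeff_nonneg hcoeff h0 (neg_nonpos.mp hr0)).ne' (isRoot_of_mem_roots hr)
  have hlead : 0 < q.leadingCoeff :=
    lt_of_le_of_ne (hcoeff _) (leadingCoeff_ne_zero.mpr fun h => by simp [h] at h0).symm
  have hcard : Multiset.card q.roots = q.natDegree := splits_iff_card_roots.mp hq
  rw [hq.eq_prod_roots, coeff_C_mul, Multiset.prod_X_sub_C_coeff _ (hcard ▸ hj),
    ← Multiset.esymm_neg]
  exact mul_pos hlead (Multiset.esymm_pos hroots (by simp [hcard]))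

end Polynomial

namespace Multiset

theorem esymm_pos_of_esymm_succ_pos {u : Multiset ℝ} {k : ℕ}
    (hnonneg : ∀ j ≤ k + 1, 0 ≤ u.esymm j) (hpos : 0 < u.esymm (k + 1)) : 0 < u.esymm k := by
  have hk : k + 1 ≤ card u := by
    by_contra! h
    exact hpos.ne' (esymm_eq_zero_of_card_lt h)
  set m := card u - (k + 1)
  set q := derivative^[m] (u.map fun r => X + C r).prod
  have hdesc : ∀ j, (0 : ℝ) < (j + m).descFactorial m := fun j => by
    exact_mod_cast Nat.descFactorial_pos.mpr (by omega)
  have hq : ∀ j ≤ k + 1, q.coeff j = (j + m).descFactorial m * u.esymm (k + 1 - j) := by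
    intro j hj
    rw [coeff_iterate_derivative, nsmul_eq_mul, prod_X_add_C_coeff u (by omega)]
    congr 2
    omega
  have hqdeg : q.natDegree ≤ k + 1 := by
    have hp : (u.map fun r => X + C r).prod.natDegree = card u := by
      rw [natDegree_multiset_prod_of_monic _ (by simp [monic_X_add_C])]
      simp
    have : q.natDegree ≤ _ - m := natDegree_iterate_derivative _ m
    omega
  have hqsplits : q.Splits :=
    (Splits.multisetProd (by simp [Splits.X_add_C])).iterate_derivative_real m
  have hqnonneg : ∀ j, 0 ≤ q.coeff j := fun j => by
    rcases le_or_gt j (k + 1) with hj | hj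
    · rw [hq j hj]
      exact mul_nonneg (hdesc j).le (hnonneg _ (by omega))
    · rw [coeff_eq_zero_of_natDegree_lt (by omega)]
  have hq0 : 0 < q.coeff 0 := by
    rw [hq 0 (by omega)]
    exact mul_pos (hdesc 0) hpos
  have hqtop : q.coeff (k + 1) ≠ 0 := by
    rw [hq (k + 1) le_rfl, Nat.sub_self, esymm_zero, mul_one]
    exact (hdesc _).ne'
  have hq1 := coeff_pos_of_splits_of_coeff_nonneg hqsplits hqnonneg hq0
    ((Nat.le_add_left 1 k).trans (le_natDegree_of_ne_zero hqtop))
  rw [hq 1 (by omega), Nat.add_sub_cancel] at hq1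
  exact pos_of_mul_pos_right hq1 (hdesc 1).le

theorem esymm_pos_of_cons {a : ℝ} {t : Multiset ℝ} {k : ℕ}
    (h : ∀ j ≤ k + 1, 0 < (a ::ₘ t).esymm j) : 0 < t.esymm k := by
  induction k using Nat.strong_induction_on with
  | _ k ih =>
  rcases k with _ | m
  · simp
  have hlow : ∀ j ≤ m, 0 < t.esymm j := fun j hj => ih j (by omega) fun i hi => h i (by omega)
  have hA := hlow m le_rfl
  have h1 := esymm_cons_succ a t m ▸ h (m + 1) (by omega)
  have h2 := esymm_cons_succ a t (m + 1) ▸ h (m + 2) le_rfl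
  by_contra! hE
  have hx : 0 ≤ -t.esymm (m + 1) / t.esymm m := div_nonneg (by linarith) hA.le
  set u := (-t.esymm (m + 1) / t.esymm m) ::ₘ t
  have hu : u.esymm (m + 1) = 0 := by
    rw [esymm_cons_succ]
    field_simp
    ring
  have hu' : 0 < u.esymm (m + 2) := by
    -- `e_m e_{m+2} > -a e_m e_{m+1} ≥ e_{m+1}²`, using `a e_m > -e_{m+1} ≥ 0`
    have : t.esymm (m + 1) ^ 2 < t.esymm m * t.esymm (m + 2) := by
      nlinarith [mul_pos hA h2, mul_nonneg (neg_nonneg.mpr hE) h1.le]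
    rw [esymm_cons_succ, div_mul_eq_mul_div, add_div' _ _ _ hA.ne']
    exact div_pos (by nlinarith) hA
  have hunonneg : ∀ j ≤ m + 2, 0 ≤ u.esymm j := by
    rintro (_ | i) hi
    · simp
    rcases lt_or_ge i m with him | him
    · rw [esymm_cons_succ]
      exact add_nonneg (hlow _ him).le (mul_nonneg hx (hlow i him.le).le)
    rcases (show i = m ∨ i = m + 1 by omega) with rfl | rfl
    exacts [hu.ge, hu'.le]
  exact (esymm_pos_of_esymm_succ_pos hunonneg hu').ne' hu

end Multiset

theorem esymmS_eq_esymm (n j : ℕ) (lam : Fin n → ℝ) :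
    esymmS n j lam = (univ.val.map lam).esymm j :=
  (esymm_map_val lam univ j).symm

theorem esymmDel_eq_esymm (n j : ℕ) (lam : Fin n → ℝ) (i : Fin n) :
    esymmDel n j lam i = ((univ.erase i).val.map lam).esymm j :=
  (esymm_map_val lam _ j).symm

theorem esymmDel_pos_general (n k : ℕ) (hk : 1 ≤ k)
    (lam : Fin n → ℝ) (hlam : GammaCone n k lam) (i : Fin n) :
    0 < esymmDel n (k - 1) lam i := by
  have hcons : univ.val.map lam = lam i ::ₘ (univ.erase i).val.map lam := by
    rw [erase_val, ← Multiset.map_cons, Multiset.cons_erase (mem_univ_val i)]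
  rw [esymmDel_eq_esymm]
  refine Multiset.esymm_pos_of_cons (a := lam i) fun j hj => ?_
  rcases Nat.eq_zero_or_pos j with rfl | hj0
  · simp
  rw [← hcons, ← esymmS_eq_esymm]
  exact hlam j hj0 (by omega)

/-- Ellipticity of `S_k` on the cone `Γ_k`: the linearized coefficients are positive. -/
theorem esymmDel_pos (n k : ℕ) (hk : 1 ≤ k) (hkn : k ≤ n)
    (lam : Fin n → ℝ) (hlam : GammaCone n k lam) (i : Fin n) :
    0 < esymmDel n (k - 1) lam i :=
  esymmDel_pos_general n k hk lam hlam i
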